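/- Fix an integer N ≥ 2 and constants L > 0, M > 1. There exists a constant C > 0, depending only on N, L and M, such that for every L-Lipschitz function f : Q' → [1, M] and every function u : ℝ^N → ℝ that is continuously differentiable on an open neighborhood of the closure of Q_f and satisfies ∫_{Q_f} u dx = 0, one has ∫_{Q_f} u² dx ≤ C² ∫_{Q_f} |∇u|² dx. -/

import Mathlib

open Set MeasureTheory

noncomputable section

/-- Projection onto the first `d` coordinates. -/
def proj {d : ℕ} (x : EuclideanSpace ℝ (Fin (d + 1))) : EuclideanSpace ℝ (Fin d) :=
  WithLp.toLp 2 (fun (i : Fin d) => x i.castSucc)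

/-- Embedding of the base `Q' × {0}`. -/
def embed {d : ℕ} (y : EuclideanSpace ℝ (Fin d)) : EuclideanSpace ℝ (Fin (d + 1)) :=
  WithLp.toLp 2 (fun (i : Fin (d + 1)) => if h : (i : ℕ) < d then y ⟨i, h⟩ else 0)

/-- The open unit cube `Q' = (0,1)^d`. -/
def cube (d : ℕ) : Set (EuclideanSpace ℝ (Fin d)) :=
  {y | ∀ i, y i ∈ Ioo (0 : ℝ) 1}

/-- The open subgraph domain `Q_f`. -/
def Qf {d : ℕ} (f : EuclideanSpace ℝ (Fin d) → ℝ) : Set (EuclideanSpace ℝ (Fin (d + 1))) :=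
  {x | proj x ∈ cube d ∧ x (Fin.last d) ∈ Ioo 0 (f (proj x))}

/-!
Induction on the dimension `d` of the base. Write points of `Q_f` as `(y, t)` with `y ∈ Q'`
and `0 < t < f y`, and let `v y` be the average of `u (y, ·)` over `(0, 1)`. Since `∫ u = 0`,
we have `∫ u² ≤ ∫ (u - c)²` for every constant `c`, and `(u - c)² ≤ 2 (u - v)² + 2 (v - c)²`.
On each vertical fibre, of length `f y ∈ [1, M]`, the one-dimensional Poincaré inequality gives
`∫ (u - v)² ≤ M² ∫ |∂ₜ u|²`. For the second term, `v y - c` is the `t`-average of the slice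
deviations `u (y, t) - m t`, where `m t` is the mean of `u (·, t)` over `Q'` and `c` is the mean
of `m` over `(0, 1)`; Jensen's inequality and the Poincaré inequality on the cube `Q'`
(constant `K_d`), applied slice by slice, bound `∫_{Q'} (v - c)²` by `K_d ∫ |∇u|²` without
differentiating `v`. Hence `C² = 2 M² + 2 M K_d`, and the case `f ≡ 1` gives
`K_{d+1} = 2 + 2 K_d`, i.e. `K_d = 2 ^ (d + 1) - 2`.
-/

section Integrals

variable {α : Type*} [MeasurableSpace α] {μ : Measure α} {s : Set α}

theorem sq_setIntegral_le_measureReal_mul {h : α → ℝ} (hs : μ s ≠ ⊤) (hh : IntegrableOn h s μ)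
    (hh2 : IntegrableOn (fun x => h x ^ 2) s μ) :
    (∫ x in s, h x ∂μ) ^ 2 ≤ μ.real s * ∫ x in s, h x ^ 2 ∂μ := by
  rcases eq_or_ne (μ s) 0 with hs0 | hs0
  · simp [Measure.restrict_eq_zero.2 hs0]
  have hpos : 0 < μ.real s := ENNReal.toReal_pos hs0 hs
  have hjensen : ((μ.real s)⁻¹ * ∫ x in s, h x ∂μ) ^ 2 ≤ (μ.real s)⁻¹ * ∫ x in s, h x ^ 2 ∂μ := by
    simpa only [setAverage_eq, smul_eq_mul] using
      (even_two.convexOn_pow (𝕜 := ℝ)).map_set_average_le (continuous_pow 2).continuousOn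
        isClosed_univ hs0 hs (ae_of_all _ fun _ => mem_univ _) hh hh2
  calc (∫ x in s, h x ∂μ) ^ 2 = μ.real s ^ 2 * ((μ.real s)⁻¹ * ∫ x in s, h x ∂μ) ^ 2 := by
        field_simp
    _ ≤ μ.real s ^ 2 * ((μ.real s)⁻¹ * ∫ x in s, h x ^ 2 ∂μ) := by gcongr
    _ = μ.real s * ∫ x in s, h x ^ 2 ∂μ := by field_simp

theorem setIntegral_sq_le_setIntegral_sub_sq {u : α → ℝ} (hs : μ s ≠ ⊤) (hu : IntegrableOn u s μ)
    (hu2 : IntegrableOn (fun x => u x ^ 2) s μ) (hmean : ∫ x in s, u x ∂μ = 0) (c : ℝ) :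
    ∫ x in s, u x ^ 2 ∂μ ≤ ∫ x in s, (u x - c) ^ 2 ∂μ := by
  have hexpand : ∫ x in s, (u x - c) ^ 2 ∂μ = ∫ x in s, u x ^ 2 ∂μ + μ.real s * c ^ 2 := by
    have hlin : IntegrableOn (fun x => 2 * u x * c) s μ := (hu.const_mul 2).mul_const c
    have hquad : IntegrableOn (fun x => u x ^ 2 - 2 * u x * c) s μ := hu2.sub hlin
    simp_rw [sub_sq]
    rw [integral_add hquad (integrableOn_const hs), integral_sub hu2 hlin,
      integral_mul_const, integral_const_mul, hmean, setIntegral_const, smul_eq_mul]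
    ring
  rw [hexpand]
  exact le_add_of_nonneg_right (by positivity)

theorem integral_sub_sq_le {a b c : α → ℝ} (hab : Integrable (fun x => (a x - b x) ^ 2) μ)
    (hbc : Integrable (fun x => (b x - c x) ^ 2) μ)
    (hac : Integrable (fun x => (a x - c x) ^ 2) μ) :
    ∫ x, (a x - c x) ^ 2 ∂μ ≤ 2 * ∫ x, (a x - b x) ^ 2 ∂μ + 2 * ∫ x, (b x - c x) ^ 2 ∂μ := by
  rw [← integral_const_mul, ← integral_const_mul,
    ← integral_add (hab.const_mul 2) (hbc.const_mul 2)]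
  exact integral_mono hac ((hab.const_mul 2).add (hbc.const_mul 2)) fun x => by
    nlinarith [sq_nonneg (a x - 2 * b x + c x)]

end Integrals

theorem sq_setIntegral_Ioo_sub_le {g m : ℝ → ℝ} (hg : ContinuousOn g (Icc 0 1))
    (hm : ContinuousOn m (Icc 0 1)) :
    ((∫ t in Ioo 0 1, g t) - ∫ t in Ioo 0 1, m t) ^ 2 ≤ ∫ t in Ioo 0 1, (g t - m t) ^ 2 := by
  have hgm := hg.sub hm
  rw [← integral_sub (hg.integrableOn_Icc.mono_set Ioo_subset_Icc_self)
    (hm.integrableOn_Icc.mono_set Ioo_subset_Icc_self)]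
  simpa using sq_setIntegral_le_measureReal_mul (μ := volume) (by simp)
    (hgm.integrableOn_Icc.mono_set Ioo_subset_Icc_self)
    ((hgm.pow 2).integrableOn_Icc.mono_set Ioo_subset_Icc_self)

theorem sq_sub_le_mul_setIntegral_deriv_sq {g g' : ℝ → ℝ} {a b : ℝ}
    (hg : ∀ r ∈ Icc a b, HasDerivAt g (g' r) r) (hg' : ContinuousOn g' (Icc a b)) {s t : ℝ}
    (hs : s ∈ Icc a b) (ht : t ∈ Icc a b) :
    (g t - g s) ^ 2 ≤ (b - a) * ∫ r in Ioo a b, g' r ^ 2 := by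
  have hst : uIcc s t ⊆ Icc a b := uIcc_subset_Icc hs ht
  have hsub : uIoc s t ⊆ Icc a b := uIoc_subset_uIcc.trans hst
  have hftc : g t - g s = ∫ r in s..t, g' r :=
    (intervalIntegral.integral_eq_sub_of_hasDerivAt (fun r hr => hg r (hst hr))
      ((hg'.mono hst).intervalIntegrable)).symm
  have hsq_int : IntegrableOn (fun r => g' r ^ 2) (Icc a b) := (hg'.pow 2).integrableOn_Icc
  calc (g t - g s) ^ 2 = (∫ r in uIoc s t, g' r) ^ 2 := by
        rw [hftc, ← sq_abs, intervalIntegral.abs_integral_eq_abs_integral_uIoc, sq_abs]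
    _ ≤ volume.real (uIoc s t) * ∫ r in uIoc s t, g' r ^ 2 :=
        sq_setIntegral_le_measureReal_mul (by simp)
          (hg'.integrableOn_Icc.mono_set hsub) (hsq_int.mono_set hsub)
    _ ≤ (b - a) * ∫ r in Icc a b, g' r ^ 2 := by
        refine mul_le_mul ?_ (setIntegral_mono_set hsq_int (ae_of_all _ fun r => sq_nonneg _)
          hsub.eventuallyLE) (setIntegral_nonneg measurableSet_uIoc fun r _ => sq_nonneg _)
          (by linarith [hs.1, hs.2])
        rw [measureReal_def, Real.volume_uIoc, ENNReal.toReal_ofReal (abs_nonneg _), abs_le]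
        constructor <;> linarith [hs.1, hs.2, ht.1, ht.2]
    _ = (b - a) * ∫ r in Ioo a b, g' r ^ 2 := by rw [integral_Icc_eq_integral_Ioo]

theorem setIntegral_sub_average_sq_le {g g' : ℝ → ℝ} {a : ℝ} (ha : 1 ≤ a)
    (hg : ∀ t ∈ Icc 0 a, HasDerivAt g (g' t) t) (hg' : ContinuousOn g' (Icc 0 a)) :
    ∫ t in Ioo 0 a, (g t - ∫ s in Ioo 0 1, g s) ^ 2 ≤ a ^ 2 * ∫ t in Ioo 0 a, g' t ^ 2 := by
  set I := ∫ t in Ioo 0 a, g' t ^ 2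
  have hgc : ContinuousOn g (Icc 0 a) := fun t ht => (hg t ht).continuousAt.continuousWithinAt
  have hunit : Icc (0 : ℝ) 1 ⊆ Icc 0 a := Icc_subset_Icc_right ha
  have hpoint : ∀ t ∈ Icc 0 a, (g t - ∫ s in Ioo 0 1, g s) ^ 2 ≤ a * I := fun t ht =>
    calc (g t - ∫ s in Ioo 0 1, g s) ^ 2 = ((∫ _ in Ioo 0 1, g t) - ∫ s in Ioo 0 1, g s) ^ 2 := by
          simp
      _ ≤ ∫ s in Ioo 0 1, (g t - g s) ^ 2 :=
          sq_setIntegral_Ioo_sub_le continuousOn_const (hgc.mono hunit)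
      _ ≤ ∫ _ in Ioo (0 : ℝ) 1, a * I :=
          setIntegral_mono_on (((continuousOn_const.sub (hgc.mono hunit)).pow 2).integrableOn_Icc
            |>.mono_set Ioo_subset_Icc_self) (integrableOn_const measure_Ioo_lt_top.ne)
            measurableSet_Ioo fun s hs => by
              simpa using sq_sub_le_mul_setIntegral_deriv_sq hg hg'
                (hunit (Ioo_subset_Icc_self hs)) ht
      _ = a * I := by simp
  calc ∫ t in Ioo 0 a, (g t - ∫ s in Ioo 0 1, g s) ^ 2 ≤ ∫ _ in Ioo 0 a, a * I :=
        setIntegral_mono_on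
          (((hgc.sub continuousOn_const).pow 2).integrableOn_Icc.mono_set Ioo_subset_Icc_self)
          (integrableOn_const (by simp)) measurableSet_Ioo
          fun t ht => hpoint t (Ioo_subset_Icc_self ht)
    _ = a ^ 2 * I := by
        rw [setIntegral_const, Real.volume_real_Ioo_of_le (by linarith), smul_eq_mul]
        ring

section Continuity

variable {X Y : Type*} [TopologicalSpace X] [TopologicalSpace Y]

theorem ContinuousOn.integrableOn_of_isCompact_closure [T2Space X] [MeasurableSpace X]
    [OpensMeasurableSpace X] {μ : Measure X} [IsFiniteMeasureOnCompacts μ] {s : Set X}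
    {h : X → ℝ} (hs : IsCompact (closure s)) (hh : ContinuousOn h (closure s)) :
    IntegrableOn h s μ :=
  (hh.integrableOn_compact hs).mono_set subset_closure

theorem continuousOn_parametric_setIntegral_of_continuousOn [FirstCountableTopology X]
    [T2Space Y] [MeasurableSpace Y] [OpensMeasurableSpace Y] {ν : Measure Y}
    [IsFiniteMeasureOnCompacts ν] {F : X → Y → ℝ} {K : Set X} {t : Set Y} (hK : IsCompact K)
    (ht : IsCompact (closure t)) (htm : MeasurableSet t)
    (hF : ContinuousOn (Function.uncurry F) (K ×ˢ closure t)) :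
    ContinuousOn (fun x => ∫ y in t, F x y ∂ν) K := by
  obtain ⟨B, hB⟩ := (hK.prod ht).exists_bound_of_continuousOn hF
  have hFx : ∀ x ∈ K, ContinuousOn (F x) t := fun x hx =>
    (hF.comp (Continuous.prodMk_right x).continuousOn
      fun y hy => ⟨hx, subset_closure hy⟩)
  refine continuousOn_of_dominated (bound := fun _ => B)
    (fun x hx => (hFx x hx).aestronglyMeasurable htm)
    (fun x hx => ae_restrict_of_forall_mem htm fun y hy => hB (x, y) ⟨hx, subset_closure hy⟩)
    (integrableOn_const ((measure_mono subset_closure).trans_lt ht.measure_lt_top).ne)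
    (ae_restrict_of_forall_mem htm fun y hy =>
      hF.comp (Continuous.prodMk_left y).continuousOn fun x hx => ⟨hx, subset_closure hy⟩)

theorem ContinuousOn.integrable_restrict_prod [SecondCountableTopology X]
    [SecondCountableTopology Y] [T2Space X] [T2Space Y] [MeasurableSpace X] [MeasurableSpace Y]
    [OpensMeasurableSpace X] [OpensMeasurableSpace Y] {μ : Measure X} {ν : Measure Y}
    [IsFiniteMeasureOnCompacts μ] [IsFiniteMeasureOnCompacts ν] [SFinite μ] [SigmaFinite ν]
    {F : X × Y → ℝ} {s : Set X} {t : Set Y} (hs : IsCompact (closure s))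
    (ht : IsCompact (closure t)) (hF : ContinuousOn F (closure s ×ˢ closure t)) :
    Integrable F ((μ.restrict s).prod (ν.restrict t)) := by
  rw [Measure.prod_restrict, ← IntegrableOn]
  rw [← closure_prod_eq] at hF
  exact hF.integrableOn_of_isCompact_closure (by rw [closure_prod_eq]; exact hs.prod ht)

end Continuity

section RegionBetween

variable {α E : Type*} [NormedAddCommGroup E] [NormedSpace ℝ E] {f g : α → ℝ} {s : Set α}
  {F : α × ℝ → E}

lemma integral_indicator_regionBetween (x : α) :
    ∫ t, (regionBetween f g s).indicator F (x, t) =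
      s.indicator (fun x => ∫ t in Ioo (f x) (g x), F (x, t)) x := by
  by_cases hx : x ∈ s
  · rw [indicator_of_mem hx, ← integral_indicator measurableSet_Ioo]
    congr 1 with t
    by_cases ht : t ∈ Ioo (f x) (g x)
    · rw [indicator_of_mem (show (x, t) ∈ regionBetween f g s from ⟨hx, ht⟩),
        indicator_of_mem ht]
    · rw [indicator_of_notMem (fun h => ht h.2), indicator_of_notMem ht]
  · simp [indicator_of_notMem hx,
      indicator_of_notMem (fun h : (x, _) ∈ regionBetween f g s => hx h.1)]

variable [MeasurableSpace α] {μ : Measure α}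

theorem setIntegral_regionBetween [SigmaFinite μ] (hf : Measurable f) (hg : Measurable g)
    (hs : MeasurableSet s) (hF : IntegrableOn F (regionBetween f g s) (μ.prod volume)) :
    ∫ p in regionBetween f g s, F p ∂μ.prod volume =
      ∫ x in s, (∫ t in Ioo (f x) (g x), F (x, t)) ∂μ := by
  have hm := measurableSet_regionBetween hf hg hs
  rw [← integral_indicator hm, integral_prod _ ((integrable_indicator_iff hm).2 hF),
    ← integral_indicator hs]
  simp_rw [integral_indicator_regionBetween]

theorem MeasureTheory.IntegrableOn.integral_regionBetween (hf : Measurable f) (hg : Measurable g)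
    (hs : MeasurableSet s) (hF : IntegrableOn F (regionBetween f g s) (μ.prod volume)) :
    IntegrableOn (fun x => ∫ t in Ioo (f x) (g x), F (x, t)) s μ := by
  have hm := measurableSet_regionBetween hf hg hs
  have := ((integrable_indicator_iff hm).2 hF).integral_prod_left
  simp_rw [integral_indicator_regionBetween] at this
  exact (integrable_indicator_iff hs).1 this

end RegionBetween

local notation "ℝ^" n:max => EuclideanSpace ℝ (Fin n)

section

variable {d : ℕ}

def snoc (y : ℝ^d) (t : ℝ) : ℝ^(d + 1) :=
  WithLp.toLp 2 (Fin.snoc (α := fun _ => ℝ) y.ofLp t)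

@[simp] lemma snoc_castSucc (y : ℝ^d) (t : ℝ) (i : Fin d) : snoc y t i.castSucc = y i := by
  simp [snoc]

@[simp] lemma snoc_last (y : ℝ^d) (t : ℝ) : snoc y t (Fin.last d) = t := by
  simp [snoc]

@[simp] lemma proj_snoc (y : ℝ^d) (t : ℝ) : proj (snoc y t) = y := by
  ext i; simp [proj]

lemma snoc_proj (x : ℝ^(d + 1)) : snoc (proj x) (x (Fin.last d)) = x := by
  ext i
  induction i using Fin.lastCases <;> simp [proj]

@[simp] lemma embed_castSucc (y : ℝ^d) (i : Fin d) : embed y i.castSucc = y i := by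
  simp [embed]

@[simp] lemma embed_last (y : ℝ^d) : embed y (Fin.last d) = 0 := by
  simp [embed]

lemma snoc_eq_embed_add (y : ℝ^d) (t : ℝ) :
    snoc y t = embed y + t • EuclideanSpace.single (Fin.last d) 1 := by
  ext i
  induction i using Fin.lastCases with
  | last => simp
  | cast i => simp [(Fin.castSucc_lt_last i).ne]

def embedₗᵢ (d : ℕ) : ℝ^d →ₗᵢ[ℝ] ℝ^(d + 1) where
  toFun := embed
  map_add' y z := by
    ext i; induction i using Fin.lastCases <;> simp
  map_smul' c y := by
    ext i; induction i using Fin.lastCases <;> simp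
  norm_map' y := by
    simp [EuclideanSpace.norm_eq, Fin.sum_univ_castSucc]

lemma continuous_snoc : Continuous fun p : ℝ^d × ℝ => snoc p.1 p.2 := by
  simp_rw [snoc_eq_embed_add]
  exact ((embedₗᵢ d).continuous.comp continuous_fst).add (continuous_snd.smul continuous_const)

lemma hasFDerivAt_snoc_left (y : ℝ^d) (t : ℝ) :
    HasFDerivAt (snoc · t) (embedₗᵢ d).toContinuousLinearMap y := by
  simp_rw [snoc_eq_embed_add]
  exact (embedₗᵢ d).toContinuousLinearMap.hasFDerivAt.add_const _

lemma hasDerivAt_snoc_right (y : ℝ^d) (t : ℝ) :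
    HasDerivAt (snoc y ·) (EuclideanSpace.single (Fin.last d) 1) t := by
  simp_rw [snoc_eq_embed_add]
  simpa using ((hasDerivAt_id t).smul_const (EuclideanSpace.single (Fin.last d) (1 : ℝ))).const_add
    (embed y)

lemma continuous_proj : Continuous (proj : ℝ^(d + 1) → ℝ^d) := by
  unfold proj; fun_prop

def snocEquiv (d : ℕ) : ℝ^(d + 1) ≃ᵐ ℝ^d × ℝ where
  toFun x := (proj x, x (Fin.last d))
  invFun p := snoc p.1 p.2
  left_inv := snoc_proj
  right_inv p := by simp
  measurable_toFun := (continuous_proj.prodMk (by fun_prop)).measurable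
  measurable_invFun := continuous_snoc.measurable

lemma measurePreserving_snocEquiv : MeasurePreserving (snocEquiv d) := by
  have h := (((EuclideanSpace.volume_preserving_symm_measurableEquiv_toLp (Fin d)).symm.prod
    (MeasurePreserving.id volume)).comp Measure.measurePreserving_swap).comp
    ((volume_preserving_piFinSuccAbove (fun _ => ℝ) (Fin.last d)).comp
      (EuclideanSpace.volume_preserving_symm_measurableEquiv_toLp (Fin (d + 1))))
  convert h using 1
  · ext x <;> simp [snocEquiv, proj, Fin.init]
  · exact Measure.volume_eq_prod _ _

lemma isOpen_cube (d : ℕ) : IsOpen (cube d) := by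
  simp only [cube, ofPred_forall]
  exact isOpen_iInter_of_finite fun i => isOpen_Ioo.preimage (by fun_prop)

lemma closure_cube (d : ℕ) : closure (cube d) = {y : ℝ^d | ∀ i, y i ∈ Icc 0 1} := by
  have h : cube d = PiLp.homeomorph 2 (fun _ : Fin d => ℝ) ⁻¹' univ.pi fun _ => Ioo 0 1 := by
    ext y; simp [cube, PiLp.homeomorph]
  rw [h, ← Homeomorph.preimage_closure, closure_pi_set]
  ext y; simp [PiLp.homeomorph, Pi.le_def, forall_and]

lemma isCompact_closure_cube (d : ℕ) : IsCompact (closure (cube d)) := by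
  have h : closure (cube d) =
      PiLp.homeomorph 2 (fun _ : Fin d => ℝ) ⁻¹' univ.pi fun _ => Icc 0 1 := by
    rw [closure_cube]; ext y; simp [PiLp.homeomorph, Pi.le_def, forall_and]
  rw [h, Homeomorph.isCompact_preimage]
  exact isCompact_univ_pi fun _ => isCompact_Icc

lemma volume_cube (d : ℕ) : volume (cube d) = 1 := by
  have h : cube d = (MeasurableEquiv.toLp 2 (Fin d → ℝ)).symm ⁻¹' univ.pi fun _ => Ioo 0 1 := by
    ext y; simp [cube]
  rw [h, (EuclideanSpace.volume_preserving_symm_measurableEquiv_toLp (Fin d)).measure_preimage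
    (MeasurableSet.univ_pi fun _ => measurableSet_Ioo).nullMeasurableSet]
  simp [volume_pi_pi]

lemma Qf_congr {f g : ℝ^d → ℝ} (h : EqOn f g (cube d)) : Qf f = Qf g := by
  ext x
  simp only [Qf, mem_ofPred_eq]
  exact and_congr_right fun hx => by rw [h hx]

lemma Qf_one : Qf (fun _ : ℝ^d => (1 : ℝ)) = cube (d + 1) := by
  ext x
  refine ⟨fun ⟨hx, hlast⟩ i => ?_, fun hx => ⟨fun i => hx i.castSucc, hx (Fin.last d)⟩⟩
  induction i using Fin.lastCases with
  | last => exact hlast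
  | cast i => exact hx i

lemma cube_succ_subset_Qf {f : ℝ^d → ℝ} (hf : ∀ y ∈ cube d, 1 ≤ f y) : cube (d + 1) ⊆ Qf f := by
  rw [← Qf_one]
  exact fun x ⟨hx, hlast⟩ => ⟨hx, hlast.1, hlast.2.trans_le (hf _ hx)⟩

lemma snoc_mem_closure_cube {y : ℝ^d} (hy : y ∈ closure (cube d)) {t : ℝ} (ht : t ∈ Icc 0 1) :
    snoc y t ∈ closure (cube (d + 1)) := by
  rw [closure_cube] at hy ⊢
  intro i
  induction i using Fin.lastCases with
  | last => simpa using ht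
  | cast i => simpa using hy i

lemma snoc_mem_closure_Qf {f : ℝ^d → ℝ} {y : ℝ^d} (hy : y ∈ cube d) (hfy : 0 < f y) {t : ℝ}
    (ht : t ∈ Icc 0 (f y)) : snoc y t ∈ closure (Qf f) := by
  rw [← closure_Ioo hfy.ne] at ht
  exact map_mem_closure (continuous_snoc.comp (Continuous.prodMk_right y)) ht
    fun s hs => ⟨by simpa using hy, by simpa using hs⟩

lemma proj_mem_closure_cube {f : ℝ^d → ℝ} {x : ℝ^(d + 1)} (hx : x ∈ closure (Qf f)) :
    proj x ∈ closure (cube d) :=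
  closure_minimal (t := proj ⁻¹' closure (cube d)) (fun _ hx => subset_closure hx.1)
    (isClosed_closure.preimage continuous_proj) hx

lemma isCompact_closure_Qf {f : ℝ^d → ℝ} {M : ℝ} (hfM : ∀ y ∈ cube d, f y ≤ M) :
    IsCompact (closure (Qf f)) := by
  have hK : IsCompact ((fun p : ℝ^d × ℝ => snoc p.1 p.2) '' (closure (cube d) ×ˢ Icc 0 M)) :=
    ((isCompact_closure_cube d).prod isCompact_Icc).image continuous_snoc
  refine hK.of_isClosed_subset isClosed_closure (closure_minimal ?_ hK.isClosed)
  intro x ⟨hx, hlast⟩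
  exact ⟨(proj x, x (Fin.last d)),
    ⟨subset_closure hx, hlast.1.le, (hlast.2.trans_le (hfM _ hx)).le⟩, snoc_proj x⟩

lemma Qf_eq_preimage (f : ℝ^d → ℝ) : Qf f = snocEquiv d ⁻¹' regionBetween 0 f (cube d) := rfl

lemma integrableOn_regionBetween_of_integrableOn_Qf {f : ℝ^d → ℝ} {h : ℝ^(d + 1) → ℝ}
    (hh : IntegrableOn h (Qf f)) :
    IntegrableOn (fun p : ℝ^d × ℝ => h (snoc p.1 p.2)) (regionBetween 0 f (cube d))
      (volume.prod volume) := by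
  rw [← Measure.volume_eq_prod]
  refine (measurePreserving_snocEquiv.integrableOn_comp_preimage
    (snocEquiv d).measurableEmbedding).1 ?_
  rwa [show (fun p : ℝ^d × ℝ => h (snoc p.1 p.2)) ∘ snocEquiv d = h from
    funext fun x => congrArg h (snoc_proj x)]

lemma exists_measurable_eqOn_cube {f : ℝ^d → ℝ} (hf : ContinuousOn f (cube d)) :
    ∃ g, Measurable g ∧ EqOn f g (cube d) := by
  classical
  exact ⟨(cube d).piecewise f 0,
    hf.measurable_piecewise continuousOn_const (isOpen_cube d).measurableSet,
    fun y hy => (piecewise_eq_of_mem _ _ _ hy).symm⟩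

theorem setIntegral_Qf {f : ℝ^d → ℝ} (hf : ContinuousOn f (cube d)) {h : ℝ^(d + 1) → ℝ}
    (hh : IntegrableOn h (Qf f)) :
    ∫ x in Qf f, h x = ∫ y in cube d, ∫ t in Ioo 0 (f y), h (snoc y t) := by
  obtain ⟨g, hg, hfg⟩ := exists_measurable_eqOn_cube hf
  rw [Qf_congr hfg] at hh ⊢
  have hfiber := setIntegral_regionBetween measurable_zero hg (isOpen_cube d).measurableSet
    (integrableOn_regionBetween_of_integrableOn_Qf hh)
  rw [← Measure.volume_eq_prod, ← measurePreserving_snocEquiv.setIntegral_preimage_emb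
    (snocEquiv d).measurableEmbedding] at hfiber
  rw [setIntegral_congr_fun (isOpen_cube d).measurableSet fun y hy => by rw [hfg hy]]
  rw [Qf_eq_preimage]
  simpa [snocEquiv, snoc_proj] using hfiber

theorem MeasureTheory.IntegrableOn.fiberIntegral_Qf {f : ℝ^d → ℝ} (hf : ContinuousOn f (cube d))
    {h : ℝ^(d + 1) → ℝ} (hh : IntegrableOn h (Qf f)) :
    IntegrableOn (fun y => ∫ t in Ioo 0 (f y), h (snoc y t)) (cube d) := by
  obtain ⟨g, hg, hfg⟩ := exists_measurable_eqOn_cube hf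
  rw [Qf_congr hfg] at hh
  refine (IntegrableOn.integral_regionBetween measurable_zero hg (isOpen_cube d).measurableSet
    (integrableOn_regionBetween_of_integrableOn_Qf hh)).congr_fun (fun y hy => ?_)
    (isOpen_cube d).measurableSet
  simp [hfg hy]

theorem setIntegral_cube_succ {h : ℝ^(d + 1) → ℝ} (hh : IntegrableOn h (cube (d + 1))) :
    ∫ x in cube (d + 1), h x = ∫ y in cube d, ∫ t in Ioo 0 1, h (snoc y t) := by
  rw [← Qf_one] at hh ⊢
  exact setIntegral_Qf continuousOn_const hh

def fiberAverage (u : ℝ^(d + 1) → ℝ) (y : ℝ^d) : ℝ := ∫ t in Ioo 0 1, u (snoc y t)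

lemma continuousOn_fiberAverage {u : ℝ^(d + 1) → ℝ} (hu : ContinuousOn u (closure (cube (d + 1)))) :
    ContinuousOn (fiberAverage u) (closure (cube d)) := by
  refine continuousOn_parametric_setIntegral_of_continuousOn (isCompact_closure_cube d)
    (by rw [closure_Ioo zero_ne_one]; exact isCompact_Icc) measurableSet_Ioo ?_
  rw [closure_Ioo zero_ne_one]
  exact hu.comp continuous_snoc.continuousOn fun p hp => snoc_mem_closure_cube hp.1 hp.2

theorem setIntegral_Qf_sub_fiberAverage_sq_le {f : ℝ^d → ℝ} (hf : ContinuousOn f (cube d))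
    {M : ℝ} (hfM : ∀ y ∈ cube d, f y ∈ Icc 1 M) {u : ℝ^(d + 1) → ℝ}
    {u' : ℝ^(d + 1) → ℝ^(d + 1) →L[ℝ] ℝ} (hu : ∀ x ∈ closure (Qf f), HasFDerivAt u (u' x) x)
    (hu' : ContinuousOn u' (closure (Qf f))) :
    ∫ x in Qf f, (u x - fiberAverage u (proj x)) ^ 2 ≤ M ^ 2 * ∫ x in Qf f, ‖u' x‖ ^ 2 := by
  have hQ := isCompact_closure_Qf fun y hy => (hfM y hy).2
  have huc : ContinuousOn u (closure (Qf f)) := fun x hx =>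
    (hu x hx).continuousAt.continuousWithinAt
  have hv : ContinuousOn (fun x => fiberAverage u (proj x)) (closure (Qf f)) :=
    (continuousOn_fiberAverage (huc.mono (closure_mono (cube_succ_subset_Qf
      fun y hy => (hfM y hy).1)))).comp continuous_proj.continuousOn
      fun x hx => proj_mem_closure_cube hx
  have hA : IntegrableOn (fun x => (u x - fiberAverage u (proj x)) ^ 2) (Qf f) :=
    ((huc.sub hv).pow 2).integrableOn_of_isCompact_closure hQ
  have hG : IntegrableOn (fun x => ‖u' x‖ ^ 2) (Qf f) :=
    (hu'.norm.pow 2).integrableOn_of_isCompact_closure hQ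
  rw [setIntegral_Qf hf hA, setIntegral_Qf hf hG, ← integral_const_mul]
  refine setIntegral_mono_on (hA.fiberIntegral_Qf hf) ((hG.fiberIntegral_Qf hf).const_mul _)
    (isOpen_cube d).measurableSet fun y hy => ?_
  have hfy := hfM y hy
  have hfiber : ∀ t ∈ Icc 0 (f y), snoc y t ∈ closure (Qf f) := fun t ht =>
    snoc_mem_closure_Qf hy (zero_lt_one.trans_le hfy.1) ht
  have hu'y : ContinuousOn (fun t => u' (snoc y t)) (Icc 0 (f y)) :=
    hu'.comp (continuous_snoc.comp (Continuous.prodMk_right y)).continuousOn hfiber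
  set e : ℝ^(d + 1) := EuclideanSpace.single (Fin.last d) 1
  have hdir : ContinuousOn (fun t => u' (snoc y t) e) (Icc 0 (f y)) :=
    hu'y.clm_apply continuousOn_const
  have hpartial : ∀ t, u' (snoc y t) e ^ 2 ≤ ‖u' (snoc y t)‖ ^ 2 := fun t => by
    rw [← sq_abs, ← Real.norm_eq_abs]
    gcongr
    simpa [e] using (u' (snoc y t)).le_opNorm e
  have hnorm : IntegrableOn (fun t => ‖u' (snoc y t)‖ ^ 2) (Ioo 0 (f y)) :=
    (hu'y.norm.pow 2).integrableOn_Icc.mono_set Ioo_subset_Icc_self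
  simp only [proj_snoc]
  calc ∫ t in Ioo 0 (f y), (u (snoc y t) - fiberAverage u y) ^ 2
      ≤ f y ^ 2 * ∫ t in Ioo 0 (f y), u' (snoc y t) e ^ 2 :=
        setIntegral_sub_average_sq_le hfy.1
          (fun t ht => (hu _ (hfiber t ht)).comp_hasDerivAt t (hasDerivAt_snoc_right y t)) hdir
    _ ≤ M ^ 2 * ∫ t in Ioo 0 (f y), ‖u' (snoc y t)‖ ^ 2 :=
        mul_le_mul (pow_le_pow_left₀ (by linarith [hfy.1]) hfy.2 2)
          (integral_mono ((hdir.pow 2).integrableOn_Icc.mono_set Ioo_subset_Icc_self) hnorm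
            hpartial)
          (setIntegral_nonneg measurableSet_Ioo fun _ _ => sq_nonneg _) (sq_nonneg M)

lemma cube_nonempty (d : ℕ) : (cube d).Nonempty :=
  ⟨WithLp.toLp 2 fun _ => 1 / 2, fun _ => by norm_num⟩

theorem setIntegral_Qf_comp_proj_le {f : ℝ^d → ℝ} (hf : ContinuousOn f (cube d)) {M : ℝ}
    (hfM : ∀ y ∈ cube d, f y ∈ Icc 0 M) {w : ℝ^d → ℝ} (hw : ContinuousOn w (closure (cube d)))
    (hw0 : ∀ y ∈ cube d, 0 ≤ w y) :
    ∫ x in Qf f, w (proj x) ≤ M * ∫ y in cube d, w y := by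
  have hint : IntegrableOn (fun x => w (proj x)) (Qf f) :=
    (hw.comp continuous_proj.continuousOn fun _ hx => proj_mem_closure_cube hx
      ).integrableOn_of_isCompact_closure (isCompact_closure_Qf fun y hy => (hfM y hy).2)
  rw [setIntegral_Qf hf hint, ← integral_const_mul]
  refine setIntegral_mono_on (hint.fiberIntegral_Qf hf)
    ((hw.integrableOn_of_isCompact_closure (isCompact_closure_cube d)).const_mul M)
    (isOpen_cube d).measurableSet fun y hy => ?_
  simp only [proj_snoc, setIntegral_const, Real.volume_real_Ioo_of_le (hfM y hy).1, sub_zero,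
    smul_eq_mul]
  exact mul_le_mul_of_nonneg_right (hfM y hy).2 (hw0 y hy)

def HasPoincareOnCube (d : ℕ) (K : ℝ) : Prop :=
  ∀ (w : ℝ^d → ℝ) (w' : ℝ^d → ℝ^d →L[ℝ] ℝ) (V : Set (ℝ^d)), IsOpen V → closure (cube d) ⊆ V →
    (∀ y ∈ V, HasFDerivAt w (w' y) y) → ContinuousOn w' V →
    ∫ y in cube d, (w y - ∫ z in cube d, w z) ^ 2 ≤ K * ∫ y in cube d, ‖w' y‖ ^ 2

namespace HasPoincareOnCube

variable {K : ℝ} {u : ℝ^(d + 1) → ℝ} {u' : ℝ^(d + 1) → ℝ^(d + 1) →L[ℝ] ℝ} {U : Set (ℝ^(d + 1))}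

theorem setIntegral_slice_le (hK : HasPoincareOnCube d K) (hK0 : 0 ≤ K) (hU : IsOpen U)
    (hcU : closure (cube (d + 1)) ⊆ U) (hu : ∀ x ∈ U, HasFDerivAt u (u' x) x)
    (hu' : ContinuousOn u' U) {t : ℝ} (ht : t ∈ Icc 0 1) :
    ∫ y in cube d, (u (snoc y t) - ∫ z in cube d, u (snoc z t)) ^ 2 ≤
      K * ∫ y in cube d, ‖u' (snoc y t)‖ ^ 2 := by
  have hsnoc : Continuous (snoc · t : ℝ^d → ℝ^(d + 1)) :=
    continuous_snoc.comp (Continuous.prodMk_left t)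
  have hV : closure (cube d) ⊆ (snoc · t) ⁻¹' U := fun y hy => hcU (snoc_mem_closure_cube hy ht)
  have hu't : ContinuousOn (fun y => u' (snoc y t)) ((snoc · t) ⁻¹' U) :=
    hu'.comp hsnoc.continuousOn fun _ hy => hy
  refine (hK _ (fun y => (u' (snoc y t)).comp (embedₗᵢ d).toContinuousLinearMap) _
    (hU.preimage hsnoc) hV (fun y hy => (hu _ hy).comp y (hasFDerivAt_snoc_left y t))
    (hu't.clm_comp continuousOn_const)).trans (mul_le_mul_of_nonneg_left ?_ hK0)
  have hcl : ContinuousOn (fun y => u' (snoc y t)) (closure (cube d)) := hu't.mono hV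
  refine setIntegral_mono_on
    (((hcl.clm_comp continuousOn_const).norm.pow 2).integrableOn_of_isCompact_closure
      (isCompact_closure_cube d))
    ((hcl.norm.pow 2).integrableOn_of_isCompact_closure (isCompact_closure_cube d))
    (isOpen_cube d).measurableSet fun y _ => ?_
  gcongr
  exact ((u' _).opNorm_comp_le _).trans
    (mul_le_of_le_one_right (norm_nonneg _) (embedₗᵢ d).norm_toContinuousLinearMap_le)

theorem exists_setIntegral_fiberAverage_sub_sq_le (hK : HasPoincareOnCube d K) (hK0 : 0 ≤ K)
    (hU : IsOpen U) (hcU : closure (cube (d + 1)) ⊆ U) (hu : ∀ x ∈ U, HasFDerivAt u (u' x) x)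
    (hu' : ContinuousOn u' U) :
    ∃ c, ∫ y in cube d, (fiberAverage u y - c) ^ 2 ≤ K * ∫ x in cube (d + 1), ‖u' x‖ ^ 2 := by
  have huc : ContinuousOn u U := fun x hx => (hu x hx).continuousAt.continuousWithinAt
  have hIcc : closure (Ioo (0 : ℝ) 1) = Icc 0 1 := closure_Ioo zero_ne_one
  have hQ : ∀ p ∈ closure (cube d) ×ˢ Icc (0 : ℝ) 1, snoc p.1 p.2 ∈ U := fun p hp =>
    hcU (snoc_mem_closure_cube hp.1 hp.2)
  have hg : ContinuousOn (fun p : ℝ^d × ℝ => u (snoc p.1 p.2)) (closure (cube d) ×ˢ Icc 0 1) :=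
    huc.comp continuous_snoc.continuousOn hQ
  set m : ℝ → ℝ := fun t => ∫ y in cube d, u (snoc y t)
  have hm : ContinuousOn m (Icc 0 1) :=
    continuousOn_parametric_setIntegral_of_continuousOn (F := fun t y => u (snoc y t)) isCompact_Icc
      (isCompact_closure_cube d) (isOpen_cube d).measurableSet
      (hg.comp continuous_swap.continuousOn fun q hq => ⟨hq.2, hq.1⟩)
  set G : ℝ^d × ℝ → ℝ := fun p => (u (snoc p.1 p.2) - m p.2) ^ 2
  have hGint : Integrable G ((volume.restrict (cube d)).prod (volume.restrict (Ioo 0 1))) :=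
    ContinuousOn.integrable_restrict_prod (isCompact_closure_cube d)
      (hIcc ▸ isCompact_Icc) (hIcc ▸ (hg.sub (hm.comp continuous_snd.continuousOn
        fun p hp => hp.2)).pow 2)
  have hNint : Integrable (fun p : ℝ^d × ℝ => ‖u' (snoc p.1 p.2)‖ ^ 2)
      ((volume.restrict (cube d)).prod (volume.restrict (Ioo 0 1))) :=
    ContinuousOn.integrable_restrict_prod (isCompact_closure_cube d)
      (hIcc ▸ isCompact_Icc) (hIcc ▸ (hu'.comp continuous_snoc.continuousOn hQ).norm.pow 2)
  refine ⟨∫ t in Ioo 0 1, m t, ?_⟩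
  calc ∫ y in cube d, (fiberAverage u y - ∫ t in Ioo 0 1, m t) ^ 2
      ≤ ∫ y in cube d, ∫ t in Ioo 0 1, G (y, t) := by
        refine setIntegral_mono_on ?_ hGint.integral_prod_left (isOpen_cube d).measurableSet
          fun y hy => sq_setIntegral_Ioo_sub_le (hg.comp (Continuous.prodMk_right y).continuousOn
            fun t ht => ⟨subset_closure hy, ht⟩) hm
        exact (((continuousOn_fiberAverage (huc.mono hcU)).sub continuousOn_const).pow 2
          ).integrableOn_of_isCompact_closure (isCompact_closure_cube d)
    _ = ∫ t in Ioo 0 1, ∫ y in cube d, G (y, t) := integral_integral_swap hGint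
    _ ≤ ∫ t in Ioo 0 1, K * ∫ y in cube d, ‖u' (snoc y t)‖ ^ 2 :=
        setIntegral_mono_on hGint.integral_prod_right (hNint.integral_prod_right.const_mul K)
          measurableSet_Ioo fun t ht =>
            hK.setIntegral_slice_le hK0 hU hcU hu hu' (Ioo_subset_Icc_self ht)
    _ = K * ∫ x in cube (d + 1), ‖u' x‖ ^ 2 := by
        rw [integral_const_mul, ← integral_integral_swap hNint,
          setIntegral_cube_succ (h := fun x => ‖u' x‖ ^ 2)
            (((hu'.mono hcU).norm.pow 2).integrableOn_of_isCompact_closure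
              (isCompact_closure_cube _))]

theorem setIntegral_Qf_sq_le (hK : HasPoincareOnCube d K) (hK0 : 0 ≤ K) {f : ℝ^d → ℝ}
    (hf : ContinuousOn f (cube d)) {M : ℝ} (hfM : ∀ y ∈ cube d, f y ∈ Icc 1 M) (hU : IsOpen U)
    (hQU : closure (Qf f) ⊆ U) (hu : ∀ x ∈ U, HasFDerivAt u (u' x) x) (hu' : ContinuousOn u' U)
    (hmean : ∫ x in Qf f, u x = 0) :
    ∫ x in Qf f, u x ^ 2 ≤ (2 * M ^ 2 + 2 * M * K) * ∫ x in Qf f, ‖u' x‖ ^ 2 := by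
  obtain ⟨y₀, hy₀⟩ := cube_nonempty d
  have hM : 0 ≤ M := zero_le_one.trans ((hfM y₀ hy₀).1.trans (hfM y₀ hy₀).2)
  have hQ := isCompact_closure_Qf fun y hy => (hfM y hy).2
  have hcubeQ : cube (d + 1) ⊆ Qf f := cube_succ_subset_Qf fun y hy => (hfM y hy).1
  have hcU : closure (cube (d + 1)) ⊆ U := (closure_mono hcubeQ).trans hQU
  have huc : ContinuousOn u U := fun x hx => (hu x hx).continuousAt.continuousWithinAt
  have hv : ContinuousOn (fiberAverage u) (closure (cube d)) :=
    continuousOn_fiberAverage (huc.mono hcU)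
  have hvp : ContinuousOn (fun x => fiberAverage u (proj x)) (closure (Qf f)) :=
    hv.comp continuous_proj.continuousOn fun _ hx => proj_mem_closure_cube hx
  obtain ⟨c, hc⟩ := hK.exists_setIntegral_fiberAverage_sub_sq_le hK0 hU hcU hu hu'
  have hA : IntegrableOn (fun x => (u x - fiberAverage u (proj x)) ^ 2) (Qf f) :=
    (((huc.mono hQU).sub hvp).pow 2).integrableOn_of_isCompact_closure hQ
  have hB : IntegrableOn (fun x => (fiberAverage u (proj x) - c) ^ 2) (Qf f) :=
    ((hvp.sub continuousOn_const).pow 2).integrableOn_of_isCompact_closure hQ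
  have hG : IntegrableOn (fun x => ‖u' x‖ ^ 2) (Qf f) :=
    ((hu'.mono hQU).norm.pow 2).integrableOn_of_isCompact_closure hQ
  set G := ∫ x in Qf f, ‖u' x‖ ^ 2
  have hAle : ∫ x in Qf f, (u x - fiberAverage u (proj x)) ^ 2 ≤ M ^ 2 * G :=
    setIntegral_Qf_sub_fiberAverage_sq_le hf hfM (fun x hx => hu x (hQU hx)) (hu'.mono hQU)
  have hBle : ∫ x in Qf f, (fiberAverage u (proj x) - c) ^ 2 ≤ M * (K * G) := by
    refine (setIntegral_Qf_comp_proj_le hf (fun y hy => ⟨zero_le_one.trans (hfM y hy).1,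
      (hfM y hy).2⟩) ((hv.sub continuousOn_const).pow 2) fun _ _ => sq_nonneg _).trans ?_
    refine mul_le_mul_of_nonneg_left (hc.trans (mul_le_mul_of_nonneg_left ?_ hK0)) hM
    exact setIntegral_mono_set hG (ae_of_all _ fun _ => sq_nonneg _) hcubeQ.eventuallyLE
  calc ∫ x in Qf f, u x ^ 2 ≤ ∫ x in Qf f, (u x - c) ^ 2 :=
        setIntegral_sq_le_setIntegral_sub_sq ((measure_mono subset_closure).trans_lt
          hQ.measure_lt_top).ne ((huc.mono hQU).integrableOn_of_isCompact_closure hQ)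
          (((huc.mono hQU).pow 2).integrableOn_of_isCompact_closure hQ) hmean c
    _ ≤ 2 * (∫ x in Qf f, (u x - fiberAverage u (proj x)) ^ 2) +
          2 * ∫ x in Qf f, (fiberAverage u (proj x) - c) ^ 2 :=
        integral_sub_sq_le (c := fun _ => c) hA hB (((huc.mono hQU).sub continuousOn_const).pow 2
          |>.integrableOn_of_isCompact_closure hQ)
    _ ≤ 2 * (M ^ 2 * G) + 2 * (M * (K * G)) := by gcongr
    _ = (2 * M ^ 2 + 2 * M * K) * G := by ring

end HasPoincareOnCube

lemma hasPoincareOnCube_zero : HasPoincareOnCube 0 0 := by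
  intro w _ _ _ _ _ _
  have hconst : ∀ y : ℝ^0, w y = w 0 := fun y => congrArg w (Subsingleton.elim y 0)
  simp [hconst, measureReal_def, volume_cube]

theorem HasPoincareOnCube.succ {K : ℝ} (hK : HasPoincareOnCube d K) (hK0 : 0 ≤ K) :
    HasPoincareOnCube (d + 1) (2 + 2 * K) := by
  intro w w' V hV hcV hw hw'
  have hint : IntegrableOn w (cube (d + 1)) :=
    (ContinuousOn.mono (fun x hx => (hw x hx).continuousAt.continuousWithinAt) hcV
      ).integrableOn_of_isCompact_closure (isCompact_closure_cube _)
  have hmean : ∫ x in Qf (fun _ : ℝ^d => (1 : ℝ)), (w x - ∫ z in cube (d + 1), w z) = 0 := by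
    rw [Qf_one, integral_sub hint (integrableOn_const (by simp [volume_cube])), setIntegral_const,
      measureReal_def, volume_cube]
    simp
  have := hK.setIntegral_Qf_sq_le hK0 continuousOn_const (fun _ _ => ⟨le_rfl, le_rfl⟩) hV
    (by rwa [Qf_one]) (fun x hx => (hw x hx).sub_const _) hw' hmean
  simpa [Qf_one] using this

theorem hasPoincareOnCube (d : ℕ) : HasPoincareOnCube d (2 ^ (d + 1) - 2) := by
  induction d with
  | zero => simpa using hasPoincareOnCube_zero
  | succ d ih =>
    convert ih.succ (sub_nonneg.2 (le_self_pow₀ one_le_two d.succ_ne_zero)) using 1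
    ring

lemma norm_gradient {F : Type*} [NormedAddCommGroup F] [InnerProductSpace ℝ F] [CompleteSpace F]
    (u : F → ℝ) (x : F) : ‖gradient u x‖ = ‖fderiv ℝ u x‖ :=
  (InnerProductSpace.toDual ℝ _).symm.norm_map _

end

theorem stmt_11_general (d : ℕ) (L M : ℝ) (hM : 1 < M) :
    ∃ C > (0 : ℝ), ∀ f : EuclideanSpace ℝ (Fin d) → ℝ,
      (∀ y ∈ cube d, f y ∈ Icc 1 M) →
      LipschitzOnWith L.toNNReal f (cube d) →
      ∀ (u : EuclideanSpace ℝ (Fin (d + 1)) → ℝ) (U : Set (EuclideanSpace ℝ (Fin (d + 1)))),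
        IsOpen U → closure (Qf f) ⊆ U → ContDiffOn ℝ 1 u U →
        (∫ x in Qf f, u x) = 0 →
        ∫ x in Qf f, (u x) ^ 2 ≤ C ^ 2 * ∫ x in Qf f, ‖gradient u x‖ ^ 2 := by
  have hK0 : (0 : ℝ) ≤ 2 ^ (d + 1) - 2 := sub_nonneg.2 (le_self_pow₀ one_le_two d.succ_ne_zero)
  have hC : 0 < 2 * M ^ 2 + 2 * M * (2 ^ (d + 1) - 2) := by nlinarith
  refine ⟨Real.sqrt _, Real.sqrt_pos.2 hC, fun f hfM hf u U hU hQU hu hmean => ?_⟩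
  rw [Real.sq_sqrt hC.le]
  simp_rw [norm_gradient]
  exact (hasPoincareOnCube d).setIntegral_Qf_sq_le hK0 hf.continuousOn hfM hU hQU
    (fun x hx => ((hu.differentiableOn one_ne_zero).differentiableAt (hU.mem_nhds hx)).hasFDerivAt)
    (hu.continuousOn_fderiv_of_isOpen hU le_rfl) hmean

theorem stmt_11 (d : ℕ) (hd : 1 ≤ d) (L M : ℝ) (hL : 0 < L) (hM : 1 < M) :
    ∃ C > (0 : ℝ), ∀ f : EuclideanSpace ℝ (Fin d) → ℝ,
      (∀ y ∈ cube d, f y ∈ Icc 1 M) →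
      LipschitzOnWith L.toNNReal f (cube d) →
      ∀ (u : EuclideanSpace ℝ (Fin (d + 1)) → ℝ) (U : Set (EuclideanSpace ℝ (Fin (d + 1)))),
        IsOpen U → closure (Qf f) ⊆ U → ContDiffOn ℝ 1 u U →
        (∫ x in Qf f, u x) = 0 →
        ∫ x in Qf f, (u x) ^ 2 ≤ C ^ 2 * ∫ x in Qf f, ‖gradient u x‖ ^ 2 :=
  stmt_11_general d L M hM
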